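/- For any square matrix X ∈ M_n(ℂ) and any orthogonal projection P (P = P* = P²), σ(P X (I − P)) ≺_w δ(X). -/

import Mathlib

/-!
Because `P (I - P) = 0`, the corner `P X (I - P)` equals `P (X - α I) (I - P)` for every `α`, so it
suffices that compressing `A` to `P A Q` by contractions `P`, `Q` does not increase the Ky Fan
`k`-norm: the infimum over `α` is the sum of the first `k` discrepancy values.
For singular bases `e`, `f` of `P A Q`, the families `P* eᵢ` and `Q fᵢ` have Bessel bound `1` and
`⟪P* eᵢ, A Q fᵢ⟫ = σᵢ(P A Q)`, so the compression bound follows from the Ky Fan maximum principle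
`Re ∑ᵢ ⟪uᵢ, A vᵢ⟫ ≤ ‖A‖_(k)` for such `k`-families. That principle comes from expanding `A` in its
singular value decomposition, AM-GM on each term, and maximising a linear function of the weights
over `{c ∈ [0, 1]ⁿ | ∑ c ≤ k}`.
-/

open scoped InnerProductSpace ComplexOrder Matrix

/-- Singular values of a square complex matrix (in some fixed order). -/
noncomputable def singVals {n : ℕ} (A : Matrix (Fin n) (Fin n) ℂ) : Fin n → ℝ :=
  fun i => Real.sqrt ((Matrix.posSemidef_conjTranspose_mul_self A).1.eigenvalues i)

/-- Sum of the `k` largest entries of a vector: supremum of sums over subsets of size `k`. -/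
noncomputable def sumK {n : ℕ} (f : Fin n → ℝ) (k : ℕ) : ℝ :=
  sSup {x | ∃ s : Finset (Fin n), s.card = k ∧ x = ∑ i ∈ s, f i}

/-- The Ky-Fan `k`-norm: sum of the `k` largest singular values. -/
noncomputable def kyFan {n : ℕ} (A : Matrix (Fin n) (Fin n) ℂ) (k : ℕ) : ℝ :=
  sumK (singVals A) k

/-- The `k`-th discrepancy norm, via its minimal characterization. -/
noncomputable def discNorm {n : ℕ} (A : Matrix (Fin n) (Fin n) ℂ) (k : ℕ) : ℝ :=
  sInf {x | ∃ α : ℂ, x = kyFan (A - α • 1) k}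

/-- The vector of discrepancy values. -/
noncomputable def discVals {n : ℕ} (A : Matrix (Fin n) (Fin n) ℂ) : Fin n → ℝ :=
  fun i => discNorm A (i.1 + 1) - discNorm A i.1

/-- Weak majorization of vectors. -/
def WeakMaj {n : ℕ} (f g : Fin n → ℝ) : Prop :=
  ∀ k : ℕ, sumK f k ≤ sumK g k

/-- Decreasing rearrangement of a vector. -/
noncomputable def sortDesc {n : ℕ} (f : Fin n → ℝ) : Fin n → ℝ :=
  fun i => f (Tuple.sort f i.rev)

section sumK

variable {n : ℕ} (f : Fin n → ℝ)

lemma finite_setOf_sum_card_eq (k : ℕ) :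
    {x | ∃ s : Finset (Fin n), s.card = k ∧ x = ∑ i ∈ s, f i}.Finite :=
  (Set.finite_range fun s : Finset (Fin n) => ∑ i ∈ s, f i).subset <| by
    rintro x ⟨s, -, rfl⟩
    exact ⟨s, rfl⟩

lemma sum_le_sumK {k : ℕ} {s : Finset (Fin n)} (hs : s.card = k) : ∑ i ∈ s, f i ≤ sumK f k :=
  le_csSup (finite_setOf_sum_card_eq f k).bddAbove ⟨s, hs, rfl⟩

lemma exists_card_eq_sumK_eq_sum {k : ℕ} (hk : k ≤ n) :
    ∃ s : Finset (Fin n), s.card = k ∧ sumK f k = ∑ i ∈ s, f i := by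
  obtain ⟨s, -, hs⟩ := Finset.exists_subset_card_eq (s := (Finset.univ : Finset (Fin n))) (n := k)
    (by simpa using hk)
  have hne : {x | ∃ s : Finset (Fin n), s.card = k ∧ x = ∑ i ∈ s, f i}.Nonempty := ⟨_, s, hs, rfl⟩
  exact hne.csSup_mem (finite_setOf_sum_card_eq f k)

lemma sumK_zero : sumK f 0 = 0 := by
  obtain ⟨s, hs, h⟩ := exists_card_eq_sumK_eq_sum f (Nat.zero_le n)
  rw [h, Finset.card_eq_zero.1 hs, Finset.sum_empty]

lemma sumK_of_lt {k : ℕ} (hk : n < k) : sumK f k = 0 := by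
  have : {x | ∃ s : Finset (Fin n), s.card = k ∧ x = ∑ i ∈ s, f i} = ∅ :=
    Set.eq_empty_of_forall_notMem fun x ⟨s, hs, _⟩ => by
      have := s.card_le_univ
      simp at this
      omega
  rw [sumK, this, Real.sSup_empty]

lemma le_of_sumK_eq_sum {k : ℕ} {s : Finset (Fin n)} (hs : s.card = k)
    (hsum : sumK f k = ∑ i ∈ s, f i) {i j : Fin n} (hi : i ∈ s) (hj : j ∉ s) : f j ≤ f i := by
  have hj' : j ∉ s.erase i := fun h => hj (Finset.erase_subset _ _ h)
  have hcard : (insert j (s.erase i)).card = k := by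
    rw [Finset.card_insert_of_notMem hj', Finset.card_erase_of_mem hi, ← hs,
      Nat.sub_add_cancel (Finset.card_pos.2 ⟨i, hi⟩)]
  have := sum_le_sumK f hcard
  rw [Finset.sum_insert hj', hsum, ← Finset.add_sum_erase s f hi] at this
  linarith

lemma sum_mul_le_sumK {k : ℕ} (hk : k ≤ n) (hf : ∀ j, 0 ≤ f j) {c : Fin n → ℝ}
    (hc0 : ∀ j, 0 ≤ c j) (hc1 : ∀ j, c j ≤ 1) (hck : ∑ j, c j ≤ k) :
    ∑ j, c j * f j ≤ sumK f k := by
  obtain ⟨s, hs, hsum⟩ := exists_card_eq_sumK_eq_sum f hk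
  rcases s.eq_empty_or_nonempty with rfl | hne
  · subst hs
    have hc : ∀ j, c j = 0 := fun j =>
      (Finset.sum_eq_zero_iff_of_nonneg fun j _ => hc0 j).1
        (le_antisymm (by simpa using hck) (Finset.sum_nonneg fun j _ => hc0 j)) j (Finset.mem_univ j)
    simp [hc, sumK_zero]
  obtain ⟨i, hi, hmin⟩ := s.exists_min_image f hne
  -- `f i` is a threshold separating the entries in `s` from the others.
  have hsplit : ∀ j, c j * f j ≤ (if j ∈ s then f j - f i else 0) + c j * f i := by
    intro j
    split_ifs with hj
    · nlinarith [hc1 j, hmin j hj]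
    · nlinarith [hc0 j, le_of_sumK_eq_sum f hs hsum hi hj]
  calc ∑ j, c j * f j ≤ ∑ j, ((if j ∈ s then f j - f i else 0) + c j * f i) :=
        Finset.sum_le_sum fun j _ => hsplit j
    _ = ∑ j ∈ s, (f j - f i) + (∑ j, c j) * f i := by
        rw [Finset.sum_add_distrib, Finset.sum_ite_mem, Finset.univ_inter, Finset.sum_mul]
    _ ≤ ∑ j ∈ s, (f j - f i) + k * f i := by gcongr; exact hf i
    _ = sumK f k := by
        rw [Finset.sum_sub_distrib, Finset.sum_const, hs, nsmul_eq_mul, hsum]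
        ring

end sumK

section Bessel

open scoped InnerProduct

def IsBessel (𝕜 : Type*) {E ι : Type*} [RCLike 𝕜] [NormedAddCommGroup E]
    [InnerProductSpace 𝕜 E] [Fintype ι] (u : ι → E) : Prop :=
  ∀ w : E, ∑ i, ‖⟪u i, w⟫_𝕜‖ ^ 2 ≤ ‖w‖ ^ 2

variable {𝕜 E F ι κ : Type*} [RCLike 𝕜] [NormedAddCommGroup E] [InnerProductSpace 𝕜 E]
  [NormedAddCommGroup F] [InnerProductSpace 𝕜 F] [Fintype ι] [Fintype κ]

lemma Orthonormal.isBessel {u : ι → E} (hu : Orthonormal 𝕜 u) : IsBessel 𝕜 u :=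
  fun w => Orthonormal.sum_inner_products_le w hu

lemma IsBessel.map [CompleteSpace E] [CompleteSpace F] {u : ι → E} (hu : IsBessel 𝕜 u)
    (L : E →L[𝕜] F) (hL : ‖L‖ ≤ 1) : IsBessel 𝕜 fun i => L (u i) := by
  intro w
  have hLw : ‖(L†) w‖ ≤ ‖w‖ := by
    calc ‖(L†) w‖ ≤ ‖L†‖ * ‖w‖ := (L†).le_opNorm w
      _ ≤ ‖w‖ := by
        rw [ContinuousLinearMap.adjoint.norm_map]
        exact mul_le_of_le_one_left (norm_nonneg w) hL
  calc ∑ i, ‖⟪L (u i), w⟫_𝕜‖ ^ 2 = ∑ i, ‖⟪u i, (L†) w⟫_𝕜‖ ^ 2 := by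
        simp only [ContinuousLinearMap.adjoint_inner_right]
    _ ≤ ‖(L†) w‖ ^ 2 := hu _
    _ ≤ ‖w‖ ^ 2 := by gcongr

lemma IsBessel.sq_norm_le_one {u : ι → E} (hu : IsBessel 𝕜 u) (i : ι) : ‖u i‖ ^ 2 ≤ 1 := by
  have h : ‖u i‖ ^ 2 * ‖u i‖ ^ 2 ≤ ‖u i‖ ^ 2 :=
    calc ‖u i‖ ^ 2 * ‖u i‖ ^ 2 = ‖⟪u i, u i⟫_𝕜‖ ^ 2 := by
          rw [inner_self_eq_norm_sq_to_K, norm_pow, RCLike.norm_ofReal, abs_norm]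
          ring
      _ ≤ ∑ i', ‖⟪u i', u i⟫_𝕜‖ ^ 2 :=
          Finset.single_le_sum (f := fun i' => ‖⟪u i', u i⟫_𝕜‖ ^ 2) (fun _ _ => by positivity)
            (Finset.mem_univ i)
      _ ≤ ‖u i‖ ^ 2 := hu _
  nlinarith [sq_nonneg ‖u i‖]

lemma IsBessel.sum_sq_norm_inner_le_one {u : ι → E} (hu : IsBessel 𝕜 u)
    (e : OrthonormalBasis κ 𝕜 E) (j : κ) : ∑ i, ‖⟪u i, e j⟫_𝕜‖ ^ 2 ≤ 1 := by
  simpa using hu (e j)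

lemma IsBessel.sum_sum_sq_norm_inner_le_card {u : ι → E} (hu : IsBessel 𝕜 u)
    (e : OrthonormalBasis κ 𝕜 E) : ∑ j, ∑ i, ‖⟪u i, e j⟫_𝕜‖ ^ 2 ≤ Fintype.card ι := by
  rw [Finset.sum_comm]
  calc ∑ i, ∑ j, ‖⟪u i, e j⟫_𝕜‖ ^ 2 = ∑ i, ‖u i‖ ^ 2 := by
        simp only [e.sum_sq_norm_inner_left]
    _ ≤ ∑ _i : ι, (1 : ℝ) := Finset.sum_le_sum fun i _ => hu.sq_norm_le_one i
    _ = Fintype.card ι := by simp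

end Bessel

section SingularValues

open Matrix
open scoped InnerProduct

lemma Matrix.IsHermitian.toEuclideanCLM_eigenvectorBasis {𝕜 ι : Type*} [RCLike 𝕜] [Fintype ι]
    [DecidableEq ι] {A : Matrix ι ι 𝕜} (hA : A.IsHermitian) (j : ι) :
    toEuclideanCLM (𝕜 := 𝕜) A (hA.eigenvectorBasis j)
      = (hA.eigenvalues j : 𝕜) • hA.eigenvectorBasis j := by
  apply WithLp.ofLp_injective
  rw [ofLp_toEuclideanCLM, hA.mulVec_eigenvectorBasis, WithLp.ofLp_smul,
    RCLike.real_smul_eq_coe_smul (K := 𝕜)]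

variable {n : ℕ}

lemma singVals_nonneg (A : Matrix (Fin n) (Fin n) ℂ) (j : Fin n) : 0 ≤ singVals A j :=
  Real.sqrt_nonneg _

lemma inner_toEuclideanCLM_eigenvectorBasis (A : Matrix (Fin n) (Fin n) ℂ) (i j : Fin n) :
    ⟪toEuclideanCLM (𝕜 := ℂ) A ((posSemidef_conjTranspose_mul_self A).1.eigenvectorBasis i),
      toEuclideanCLM (𝕜 := ℂ) A ((posSemidef_conjTranspose_mul_self A).1.eigenvectorBasis j)⟫_ℂ
      = if i = j then (singVals A j : ℂ) ^ 2 else 0 := by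
  have heig : (posSemidef_conjTranspose_mul_self A).1.eigenvalues j = singVals A j ^ 2 :=
    (Real.sq_sqrt ((posSemidef_conjTranspose_mul_self A).eigenvalues_nonneg j)).symm
  have hadj : (toEuclideanCLM (𝕜 := ℂ) A)† = toEuclideanCLM (𝕜 := ℂ) Aᴴ := by
    rw [← ContinuousLinearMap.star_eq_adjoint, ← map_star]
    rfl
  rw [← ContinuousLinearMap.adjoint_inner_right, hadj, ← mul_apply_eq_comp, ← map_mul,
    IsHermitian.toEuclideanCLM_eigenvectorBasis, inner_smul_right,
    orthonormal_iff_ite.mp (OrthonormalBasis.orthonormal _), heig]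
  split_ifs <;> simp

lemma exists_orthonormalBasis_toEuclideanCLM_apply_eq (A : Matrix (Fin n) (Fin n) ℂ) :
    ∃ f e : OrthonormalBasis (Fin n) ℂ (EuclideanSpace ℂ (Fin n)),
      ∀ j, toEuclideanCLM (𝕜 := ℂ) A (f j) = (singVals A j : ℂ) • e j := by
  have hinner := inner_toEuclideanCLM_eigenvectorBasis A
  set f := (posSemidef_conjTranspose_mul_self A).1.eigenvectorBasis
  set s : Set (Fin n) := {j | singVals A j ≠ 0}
  let v : Fin n → EuclideanSpace ℂ (Fin n) :=
    fun j => (singVals A j : ℂ)⁻¹ • toEuclideanCLM (𝕜 := ℂ) A (f j)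
  have hv : Orthonormal ℂ (s.domRestrict v) := by
    rw [orthonormal_iff_ite]
    rintro ⟨i, hi⟩ ⟨j, hj⟩
    change ⟪v i, v j⟫_ℂ = _
    simp only [v, inner_smul_left, inner_smul_right, hinner, Subtype.mk.injEq, map_inv₀,
      Complex.conj_ofReal]
    split_ifs with hij
    · subst hij
      have : (singVals A i : ℂ) ≠ 0 := Complex.ofReal_ne_zero.mpr hi
      field_simp
    · simp
  obtain ⟨e, he⟩ := hv.exists_orthonormalBasis_extension_of_card_eq (by simp)
  refine ⟨f, e, fun j => ?_⟩
  by_cases hj : singVals A j = 0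
  · have := hinner j j
    rw [if_pos rfl, hj, Complex.ofReal_zero, zero_pow two_ne_zero, inner_self_eq_zero] at this
    rw [this, hj, Complex.ofReal_zero, zero_smul]
  · rw [he j hj, smul_smul, mul_inv_cancel₀ (Complex.ofReal_ne_zero.mpr hj), one_smul]

end SingularValues

section KyFan

open Matrix
open scoped InnerProduct

variable {n : ℕ}

lemma re_inner_toEuclideanCLM_le (A : Matrix (Fin n) (Fin n) ℂ)
    {f e : OrthonormalBasis (Fin n) ℂ (EuclideanSpace ℂ (Fin n))}
    (hfe : ∀ j, toEuclideanCLM (𝕜 := ℂ) A (f j) = (singVals A j : ℂ) • e j)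
    (u v : EuclideanSpace ℂ (Fin n)) :
    (⟪u, toEuclideanCLM (𝕜 := ℂ) A v⟫_ℂ).re
      ≤ ∑ j, (‖⟪u, e j⟫_ℂ‖ ^ 2 + ‖⟪v, f j⟫_ℂ‖ ^ 2) / 2 * singVals A j := by
  conv_lhs => rw [← f.sum_repr' v]
  simp only [map_sum, map_smul, hfe, smul_smul, inner_sum, inner_smul_right, Complex.re_sum]
  refine Finset.sum_le_sum fun j _ => ?_
  have hσ := singVals_nonneg A j
  calc (⟪f j, v⟫_ℂ * (singVals A j : ℂ) * ⟪u, e j⟫_ℂ).re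
      ≤ ‖⟪f j, v⟫_ℂ * (singVals A j : ℂ) * ⟪u, e j⟫_ℂ‖ := Complex.re_le_norm _
    _ = ‖⟪u, e j⟫_ℂ‖ * ‖⟪v, f j⟫_ℂ‖ * singVals A j := by
      rw [norm_mul, norm_mul, Complex.norm_real, Real.norm_of_nonneg hσ, norm_inner_symm]
      ring
    _ ≤ (‖⟪u, e j⟫_ℂ‖ ^ 2 + ‖⟪v, f j⟫_ℂ‖ ^ 2) / 2 * singVals A j := by
      gcongr
      nlinarith [two_mul_le_add_sq ‖⟪u, e j⟫_ℂ‖ ‖⟪v, f j⟫_ℂ‖]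

lemma re_sum_inner_toEuclideanCLM_le_sumK (A : Matrix (Fin n) (Fin n) ℂ) {ι : Type*} [Fintype ι]
    (hι : Fintype.card ι ≤ n) {u v : ι → EuclideanSpace ℂ (Fin n)} (hu : IsBessel ℂ u)
    (hv : IsBessel ℂ v) :
    (∑ i, ⟪u i, toEuclideanCLM (𝕜 := ℂ) A (v i)⟫_ℂ).re ≤ sumK (singVals A) (Fintype.card ι) := by
  obtain ⟨f, e, hfe⟩ := exists_orthonormalBasis_toEuclideanCLM_apply_eq A
  set c : Fin n → ℝ := fun j => (∑ i, ‖⟪u i, e j⟫_ℂ‖ ^ 2 + ∑ i, ‖⟪v i, f j⟫_ℂ‖ ^ 2) / 2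
  have hc0 : ∀ j, 0 ≤ c j := fun j => by positivity
  have hc1 : ∀ j, c j ≤ 1 := fun j => by
    simp only [c]
    linarith [hu.sum_sq_norm_inner_le_one e j, hv.sum_sq_norm_inner_le_one f j]
  have hck : ∑ j, c j ≤ Fintype.card ι := by
    simp only [c, ← Finset.sum_div, Finset.sum_add_distrib]
    linarith [hu.sum_sum_sq_norm_inner_le_card e, hv.sum_sum_sq_norm_inner_le_card f]
  calc (∑ i, ⟪u i, toEuclideanCLM (𝕜 := ℂ) A (v i)⟫_ℂ).re
      ≤ ∑ i, ∑ j, (‖⟪u i, e j⟫_ℂ‖ ^ 2 + ‖⟪v i, f j⟫_ℂ‖ ^ 2) / 2 * singVals A j := by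
        rw [Complex.re_sum]
        exact Finset.sum_le_sum fun i _ => re_inner_toEuclideanCLM_le A hfe (u i) (v i)
    _ = ∑ j, c j * singVals A j := by
        rw [Finset.sum_comm]
        simp only [c, ← Finset.sum_mul, ← Finset.sum_div, Finset.sum_add_distrib]
    _ ≤ sumK (singVals A) (Fintype.card ι) :=
        sum_mul_le_sumK _ hι (singVals_nonneg A) hc0 hc1 hck

lemma sumK_singVals_mul_mul_le (A P Q : Matrix (Fin n) (Fin n) ℂ)
    (hP : ‖toEuclideanCLM (𝕜 := ℂ) P‖ ≤ 1) (hQ : ‖toEuclideanCLM (𝕜 := ℂ) Q‖ ≤ 1) {k : ℕ}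
    (hk : k ≤ n) : sumK (singVals (P * A * Q)) k ≤ sumK (singVals A) k := by
  obtain ⟨f, e, hfe⟩ := exists_orthonormalBasis_toEuclideanCLM_apply_eq (P * A * Q)
  obtain ⟨s, hs, hsum⟩ := exists_card_eq_sumK_eq_sum (singVals (P * A * Q)) hk
  have hu : IsBessel ℂ fun i : s => ((toEuclideanCLM (𝕜 := ℂ) P)†) (e i) :=
    (e.orthonormal.comp _ Subtype.val_injective).isBessel.map _
      (by rwa [ContinuousLinearMap.adjoint.norm_map])
  have hv : IsBessel ℂ fun i : s => toEuclideanCLM (𝕜 := ℂ) Q (f i) :=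
    (f.orthonormal.comp _ Subtype.val_injective).isBessel.map _ hQ
  have hcard : Fintype.card s = k := by rw [Fintype.card_coe, hs]
  have hinner : ∀ i, ⟪((toEuclideanCLM (𝕜 := ℂ) P)†) (e i),
      toEuclideanCLM (𝕜 := ℂ) A (toEuclideanCLM (𝕜 := ℂ) Q (f i))⟫_ℂ = singVals (P * A * Q) i := by
    intro i
    have h := hfe i
    rw [map_mul, map_mul, mul_apply_eq_comp, mul_apply_eq_comp] at h
    rw [ContinuousLinearMap.adjoint_inner_left, h, inner_smul_right,
      inner_self_eq_one_of_norm_eq_one (e.norm_eq_one i), mul_one]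
  calc sumK (singVals (P * A * Q)) k
      = (∑ i : s, ⟪((toEuclideanCLM (𝕜 := ℂ) P)†) (e i),
          toEuclideanCLM (𝕜 := ℂ) A (toEuclideanCLM (𝕜 := ℂ) Q (f i))⟫_ℂ).re := by
        simp only [hinner, Complex.re_sum, Complex.ofReal_re, Finset.sum_coe_sort s, hsum]
    _ ≤ sumK (singVals A) k := hcard ▸ re_sum_inner_toEuclideanCLM_le_sumK A (hcard ▸ hk) hu hv

end KyFan

lemma IsIdempotentElem.mul_sub_smul_one_mul_one_sub {𝕜 R : Type*} [CommRing 𝕜] [Ring R]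
    [Algebra 𝕜 R] {p : R} (hp : IsIdempotentElem p) (x : R) (α : 𝕜) :
    p * (x - α • 1) * (1 - p) = p * x * (1 - p) := by
  simp [mul_sub, sub_mul, hp.eq]

section Discrepancy

variable {n : ℕ}

lemma le_discNorm {X : Matrix (Fin n) (Fin n) ℂ} {k : ℕ} {c : ℝ}
    (h : ∀ α : ℂ, c ≤ kyFan (X - α • 1) k) : c ≤ discNorm X k :=
  le_csInf ⟨_, 0, rfl⟩ fun _ ⟨α, hα⟩ => hα ▸ h α

lemma discNorm_zero (X : Matrix (Fin n) (Fin n) ℂ) : discNorm X 0 = 0 := by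
  simp only [discNorm, kyFan, sumK_zero, exists_const, Set.ofPred_eq_eq_singleton, csInf_singleton]

lemma discNorm_le_sumK_discVals (X : Matrix (Fin n) (Fin n) ℂ) {k : ℕ} (hk : k ≤ n) :
    discNorm X k ≤ sumK (discVals X) k := by
  have htelescope : ∑ i : Fin k, discVals X (Fin.castLE hk i) = discNorm X k := by
    simp only [discVals, Fin.val_castLE]
    rw [Fin.sum_univ_eq_sum_range (fun m => discNorm X (m + 1) - discNorm X m),
      Finset.sum_range_sub (discNorm X), discNorm_zero, sub_zero]
  have := sum_le_sumK (discVals X) (k := k) (s := Finset.univ.map (Fin.castLEEmb hk)) (by simp)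
  rwa [Finset.sum_map, Fin.coe_castLEEmb, htelescope] at this

end Discrepancy

/-- For any X and orthogonal projection P, σ(P X (I - P)) ≺_w δ(X). -/
theorem singVals_corner_le_discVals (n : ℕ) (X P : Matrix (Fin n) (Fin n) ℂ)
    (hP1 : P = Pᴴ) (hP2 : P * P = P) :
    WeakMaj (singVals (P * X * (1 - P))) (discVals X) := by
  have hP : IsStarProjection P := ⟨hP2, hP1.symm⟩
  have hnorm : ∀ {R : Matrix (Fin n) (Fin n) ℂ}, IsStarProjection R →
      ‖Matrix.toEuclideanCLM (𝕜 := ℂ) R‖ ≤ 1 := fun hR => (hR.map _).norm_le _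
  intro k
  rcases le_or_gt k n with hk | hk
  · calc sumK (singVals (P * X * (1 - P))) k ≤ discNorm X k := le_discNorm fun α => by
          rw [kyFan, ← hP.isIdempotentElem.mul_sub_smul_one_mul_one_sub X α]
          exact sumK_singVals_mul_mul_le _ _ _ (hnorm hP) (hnorm hP.one_sub) hk
      _ ≤ sumK (discVals X) k := discNorm_le_sumK_discVals X hk
  · rw [sumK_of_lt _ hk, sumK_of_lt _ hk]
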